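/- Let p, q be positive integers and α : (ZMod p) × (ZMod q) → ℝ a probability distribution with α(0,0) = 0 (α ≥ 0 and Σ α = 1). Define, on the complex matrices indexed by (ZMod p) × (ZMod q), L(x) = Σ_{(i,j)} α(-i,-j) (J_p^i ⊗ J_q^j)* x (J_p^i ⊗ J_q^j) − x and L̃(x) = Σ_{(i,j)} α(i,j) (J_p^i ⊗ J_q^j)* x (J_p^i ⊗ J_q^j) − x. Then the following are equivalent: (a) there exists a Hermitian matrix K such that L̃(x) − L(x) = 2i(Kx − xK) for every matrix x (quantum detailed balance with respect to the invariant state ρ = (1/(pq))·I); (b) α(i,j) = α(-i,-j) for all (i,j) ∈ (ZMod p) × (ZMod q). -/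

import Mathlib

/-!
Conjugation by the Kraus operator `J_p^i ⊗ J_q^j` translates a matrix by `(i, j)` along both
indices, so `(L̃ - L)(x)` has entries `∑ₜ (α t - α (-t)) x (u - t) (v - t)`. For the diagonal
matrix unit at `(0, 0)` its diagonal entry at `s` is `α s - α (-s)`, whereas the diagonal of a
commutator with a diagonal matrix vanishes. Conversely, a symmetric `α` gives `L̃ = L`, and
`K = 0` works.
-/

open Matrix Kronecker

noncomputable section

/-- The primary permutation (left-shift) matrix `J_p`. -/
def Jmat (p : ℕ) : Matrix (ZMod p) (ZMod p) ℂ :=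
  Matrix.of fun i j => if j = i + 1 then 1 else 0

/-- The Kraus operator `J_p^i ⊗ J_q^j`. -/
def Kr (p q : ℕ) [NeZero p] [NeZero q] (i : ZMod p) (j : ZMod q) :
    Matrix (ZMod p × ZMod q) (ZMod p × ZMod q) ℂ :=
  (Jmat p ^ i.val) ⊗ₖ (Jmat q ^ j.val)

/-- The Heisenberg-picture circulant GKSL generator `L` associated with `α`. -/
def Lgen (p q : ℕ) [NeZero p] [NeZero q] (α : ZMod p × ZMod q → ℝ)
    (y : Matrix (ZMod p × ZMod q) (ZMod p × ZMod q) ℂ) :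
    Matrix (ZMod p × ZMod q) (ZMod p × ZMod q) ℂ :=
  (∑ ij : ZMod p × ZMod q,
    (α (-ij.1, -ij.2) : ℂ) • ((Kr p q ij.1 ij.2)ᴴ * y * Kr p q ij.1 ij.2)) - y

/-- The `ρ`-adjoint generator `L̃` associated with `α` (for `ρ = (1/(pq))·I`). -/
def LgenTilde (p q : ℕ) [NeZero p] [NeZero q] (α : ZMod p × ZMod q → ℝ)
    (x : Matrix (ZMod p × ZMod q) (ZMod p × ZMod q) ℂ) :
    Matrix (ZMod p × ZMod q) (ZMod p × ZMod q) ℂ :=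
  (∑ ij : ZMod p × ZMod q,
    (α ij : ℂ) • ((Kr p q ij.1 ij.2)ᴴ * x * Kr p q ij.1 ij.2)) - x

lemma Jmat_pow_apply (p : ℕ) [NeZero p] (k : ℕ) (a b : ZMod p) :
    (Jmat p ^ k) a b = if b = a + k then 1 else 0 := by
  induction k generalizing b with
  | zero => simp [one_apply, eq_comm]
  | succ k ih =>
    rw [pow_succ, mul_apply]
    simp only [ih, ite_mul, one_mul, zero_mul, Finset.sum_ite_eq', Finset.mem_univ, if_true]
    simp [Jmat, add_assoc]

lemma Kr_apply (p q : ℕ) [NeZero p] [NeZero q] (i : ZMod p) (j : ZMod q)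
    (u v : ZMod p × ZMod q) :
    Kr p q i j u v = if v = u + (i, j) then 1 else 0 := by
  simp [Kr, Jmat_pow_apply, Prod.ext_iff, ← ite_and, and_comm]

lemma conjTranspose_Kr_mul_mul_Kr_apply (p q : ℕ) [NeZero p] [NeZero q] (i : ZMod p)
    (j : ZMod q) (x : Matrix (ZMod p × ZMod q) (ZMod p × ZMod q) ℂ) (u v : ZMod p × ZMod q) :
    ((Kr p q i j)ᴴ * x * Kr p q i j) u v = x (u - (i, j)) (v - (i, j)) := by
  simp [mul_apply, Kr_apply, ← sub_eq_iff_eq_add]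

lemma LgenTilde_sub_Lgen_apply (p q : ℕ) [NeZero p] [NeZero q] (α : ZMod p × ZMod q → ℝ)
    (x : Matrix (ZMod p × ZMod q) (ZMod p × ZMod q) ℂ) (u v : ZMod p × ZMod q) :
    (LgenTilde p q α x - Lgen p q α x) u v =
      ∑ t, ((α t : ℂ) - α (-t.1, -t.2)) * x (u - t) (v - t) := by
  simp [LgenTilde, Lgen, Matrix.sum_apply, conjTranspose_Kr_mul_mul_Kr_apply, sub_mul,
    Finset.sum_sub_distrib]

lemma commutator_diagonal_apply_self {n R : Type*} [Fintype n] [DecidableEq n] [CommRing R]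
    (K : Matrix n n R) (d : n → R) (s : n) : (K * diagonal d - diagonal d * K) s s = 0 := by
  simp [mul_comm]

theorem stmt19_general (p q : ℕ) [NeZero p] [NeZero q]
    (α : ZMod p × ZMod q → ℝ) :
    (∃ K : Matrix (ZMod p × ZMod q) (ZMod p × ZMod q) ℂ, Kᴴ = K ∧
      ∀ x : Matrix (ZMod p × ZMod q) (ZMod p × ZMod q) ℂ,
        LgenTilde p q α x - Lgen p q α x =
          (2 * Complex.I) • (K * x - x * K)) ↔
    ∀ ij : ZMod p × ZMod q, α ij = α (-ij.1, -ij.2) := by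
  constructor
  · rintro ⟨K, -, hK⟩ s
    have h := congrFun₂ (hK (diagonal (Pi.single 0 1))) s s
    rw [LgenTilde_sub_Lgen_apply, Matrix.smul_apply, commutator_diagonal_apply_self, smul_zero] at h
    simpa [diagonal_apply, Pi.single_apply, sub_eq_zero] using h
  · intro h
    refine ⟨0, conjTranspose_zero, fun x => ?_⟩
    ext u v
    rw [LgenTilde_sub_Lgen_apply]
    simp [← h]

/-- Quantum detailed balance (Alicki, Frigerio–Gorini–Kossakowski–Verri) holds
for a circulant qms iff the distribution `α` is symmetric under inversion. -/
theorem stmt19 (p q : ℕ) [NeZero p] [NeZero q]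
    (α : ZMod p × ZMod q → ℝ) (hα : ∀ ij, 0 ≤ α ij)
    (hsum : ∑ ij : ZMod p × ZMod q, α ij = 1) (h0 : α (0, 0) = 0) :
    (∃ K : Matrix (ZMod p × ZMod q) (ZMod p × ZMod q) ℂ, Kᴴ = K ∧
      ∀ x : Matrix (ZMod p × ZMod q) (ZMod p × ZMod q) ℂ,
        LgenTilde p q α x - Lgen p q α x =
          (2 * Complex.I) • (K * x - x * K)) ↔
    ∀ ij : ZMod p × ZMod q, α ij = α (-ij.1, -ij.2) :=
  stmt19_general p q α
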